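/- (Proposition 1, existence) For every pure braid b ∈ P_n there exist c ∈ P_{n−1} and r ∈ R_n' such that b = ι(c) · r, where ι : B_{n−1} → B_n is the homomorphism sending each generator σ_i of B_{n−1} to the generator σ_i of B_n. In other words, every coset of R_n' in P_n contains a representative lying in the image of P_{n−1} under ι (a representative in which the n-th strand runs straight). -/

import Mathlib

/-!
Conjugating a flip by a generator `σ_j` gives a flip or a product of the flips `r_j, r_{j+1}`:
writing `r_j = Q σ_j` and `r_{j+1} = σ_j Q`, the square `Q²` commutes with `σ_j`. Hence `R_n'` is
normal, and `J = ι(B_{n-1}) ⊔ R_n'` is the product set `ι(B_{n-1}) R_n'`.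

With `τ_k = σ_{n-1} ⋯ σ_k` (so `τ_n = 1`), the cosets `J τ_k`, `1 ≤ k ≤ n`, cover `B_n`: right
multiplication by `σ_j` sends `J τ_k` to `J τ_{k'}`, where `k'` is the image of `k` under the
transposition `(j, j+1)`. The only nontrivial case is `τ_j σ_j τ_{j+1}⁻¹ = ι(r_j')⁻¹ r_j`, where
`r_j'` is the corresponding flip of `B_{n-1}`. Since `ι(B_{n-1})` and `R_n'` fix the last strand
while `τ_k` moves it for `k < n`, a pure braid lies in `J`, so it is `ι(c) r` with `ι(c)`, hence
`c`, pure.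
-/

namespace Braid

/-- Braid relations on generators indexed by `Fin m`; the generator `i : Fin m` stands for the
Artin generator `σ_{i+1}` of the braid group on `m+1` strands: the relations are
`σ_i σ_j = σ_j σ_i` for `|i-j| ≥ 2` and `σ_i σ_{i+1} σ_i = σ_{i+1} σ_i σ_{i+1}`. -/
def braidRels (m : ℕ) : Set (FreeGroup (Fin m)) :=
  {r | ∃ i j : Fin m, i.val + 2 ≤ j.val ∧
      r = .of i * .of j * (.of j * .of i)⁻¹} ∪
  {r | ∃ (i : Fin m) (hij : i.val + 1 < m),
      r = .of i * .of ⟨i.val + 1, hij⟩ * .of i *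
        (.of ⟨i.val + 1, hij⟩ * .of i * .of ⟨i.val + 1, hij⟩)⁻¹}

/-- The Artin braid group `B_n` on `n` strands, presented with generators `σ_1, …, σ_{n-1}`
and the braid relations. -/
def BraidGroup (n : ℕ) : Type := PresentedGroup (braidRels (n - 1))

instance (n : ℕ) : Group (BraidGroup n) := by unfold BraidGroup; infer_instance

/-- The Artin generator `σ_i` of `B_n`, for `1 ≤ i ≤ n-1` (junk value `1` otherwise). -/
def σ (n : ℕ) (i : ℕ) : BraidGroup n :=
  if h : 1 ≤ i ∧ i ≤ n - 1 then PresentedGroup.of ⟨i - 1, by omega⟩ else 1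

/-- The ascending product `σ_a σ_{a+1} ⋯ σ_b` (empty product if `b < a`). -/
def up (n a b : ℕ) : BraidGroup n := ((List.range' a (b + 1 - a)).map (σ n)).prod

/-- The descending product `σ_a σ_{a-1} ⋯ σ_b` (empty product if `a < b`). -/
def down (n a b : ℕ) : BraidGroup n :=
  ((List.range' b (a + 1 - b)).reverse.map (σ n)).prod

/-- The full twist `d = (σ_{n-1} ⋯ σ_2 σ_1)^n` of `B_n`. -/
def fullTwist (n : ℕ) : BraidGroup n := (down n (n - 1) 1) ^ n

/-- The flip `r_i = σ_{i-1} ⋯ σ_2 σ_1^2 σ_2 ⋯ σ_{n-2} σ_{n-1}^2 σ_{n-2} ⋯ σ_i` of `B_n`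
(for `1 ≤ i ≤ n`), written as `(σ_{i-1} ⋯ σ_1) (σ_1 ⋯ σ_{n-1}) (σ_{n-1} ⋯ σ_i)`. -/
def flip (n i : ℕ) : BraidGroup n :=
  down n (i - 1) 1 * up n 1 (n - 1) * down n (n - 1) i

/-- The descending product of flips `r_a r_{a-1} ⋯ r_b` (empty product if `a < b`). -/
def flipsDown (n a b : ℕ) : BraidGroup n :=
  ((List.range' b (a + 1 - b)).reverse.map (flip n)).prod

/-- The subgroup `R_n ⊆ B_n` generated by the full twist `d` and the flips `r_1, …, r_n`. -/
def R (n : ℕ) : Subgroup (BraidGroup n) :=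
  Subgroup.closure ({fullTwist n} ∪ flip n '' Set.Icc 1 n)

/-- The subgroup `R_n' ⊆ B_n` generated by the flips `r_1, …, r_n`. -/
def R' (n : ℕ) : Subgroup (BraidGroup n) :=
  Subgroup.closure (flip n '' Set.Icc 1 n)

private lemma swap_braid {n : ℕ} (a b c : Fin n) (hab : a ≠ b) (hbc : b ≠ c) (hac : a ≠ c) :
    Equiv.swap a b * Equiv.swap b c * Equiv.swap a b
      = Equiv.swap b c * Equiv.swap a b * Equiv.swap b c := by
  have h1 : Equiv.swap b a * Equiv.swap c b * Equiv.swap b a = Equiv.swap a c :=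
    Equiv.swap_mul_swap_mul_swap (Ne.symm hbc) hac.symm
  have h2 : Equiv.swap b c * Equiv.swap a b * Equiv.swap b c = Equiv.swap c a :=
    Equiv.swap_mul_swap_mul_swap hab hac
  rw [h2, Equiv.swap_comm a b, Equiv.swap_comm b c, h1, Equiv.swap_comm a c]

private lemma swap_commute {n : ℕ} (a b c d : Fin n)
    (hac : a ≠ c) (had : a ≠ d) (hbc : b ≠ c) (hbd : b ≠ d) :
    Equiv.swap a b * Equiv.swap c d = Equiv.swap c d * Equiv.swap a b := by
  refine Equiv.Perm.Disjoint.commute ?_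
  intro x
  by_cases h1 : x = a
  · subst h1; right; exact Equiv.swap_apply_of_ne_of_ne hac had
  · by_cases h2 : x = b
    · subst h2; right; exact Equiv.swap_apply_of_ne_of_ne hbc hbd
    · left; exact Equiv.swap_apply_of_ne_of_ne h1 h2

/-- The transposition `(i, i+1)` of `Fin n` associated to the generator `i : Fin (n-1)`. -/
def permGen (n : ℕ) (i : Fin (n - 1)) : Equiv.Perm (Fin n) :=
  Equiv.swap ⟨i.val, by have := i.isLt; omega⟩ ⟨i.val + 1, by have := i.isLt; omega⟩

/-- The homomorphism `B_n → Sym(n)` sending `σ_i` to the transposition `(i, i+1)`. -/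
def toPerm (n : ℕ) : BraidGroup n →* Equiv.Perm (Fin n) :=
  PresentedGroup.toGroup (f := permGen n)
    (by
      rintro r (⟨i, j, hij, rfl⟩ | ⟨i, hij, rfl⟩) <;>
        simp only [map_mul, map_inv, FreeGroup.lift_apply_of, permGen] <;> rw [mul_inv_eq_one]
      · refine swap_commute _ _ _ _ ?_ ?_ ?_ ?_ <;>
          · rw [ne_eq, Fin.mk.injEq]; omega
      · refine swap_braid _ _ _ ?_ ?_ ?_ <;>
          · rw [ne_eq, Fin.mk.injEq]; omega)

/-- The pure braid group `P_n`: the kernel of `B_n → Sym(n)`, `σ_i ↦ (i, i+1)`. -/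
def P (n : ℕ) : Subgroup (BraidGroup n) := (toPerm n).ker

private lemma mk_rel_eq_one {m : ℕ} {r : FreeGroup (Fin m)} (h : r ∈ braidRels m) :
    PresentedGroup.mk (braidRels m) r = 1 :=
  (QuotientGroup.eq_one_iff _).mpr (Subgroup.subset_normalClosure h)

lemma σ_comm {n i j : ℕ} (h1 : 1 ≤ i) (h2 : i + 2 ≤ j) (h3 : j ≤ n - 1) :
    σ n i * σ n j = σ n j * σ n i := by
  have e1 : σ n i = (PresentedGroup.of (rels := braidRels (n - 1)) ⟨i - 1, by omega⟩ : BraidGroup n) :=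
    dif_pos (⟨h1, by omega⟩ : 1 ≤ i ∧ i ≤ n - 1)
  have e2 : σ n j = (PresentedGroup.of (rels := braidRels (n - 1)) ⟨j - 1, by omega⟩ : BraidGroup n) :=
    dif_pos (⟨by omega, h3⟩ : 1 ≤ j ∧ j ≤ n - 1)
  rw [e1, e2]
  have hmem : (FreeGroup.of (⟨i - 1, by omega⟩ : Fin (n-1)) * .of ⟨j - 1, by omega⟩ *
      (.of ⟨j - 1, by omega⟩ * .of ⟨i - 1, by omega⟩)⁻¹) ∈ braidRels (n - 1) :=
    Or.inl ⟨⟨i - 1, by omega⟩, ⟨j - 1, by omega⟩, by show i - 1 + 2 ≤ j - 1; omega, rfl⟩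
  have h := mk_rel_eq_one hmem
  rw [map_mul, map_inv, mul_inv_eq_one, map_mul, map_mul] at h
  exact h

set_option maxHeartbeats 1600000 in
lemma σ_braid {n i : ℕ} (h1 : 1 ≤ i) (h2 : i + 1 ≤ n - 1) :
    σ n i * σ n (i + 1) * σ n i = σ n (i + 1) * σ n i * σ n (i + 1) := by
  have e1 : σ n i = (PresentedGroup.of (rels := braidRels (n - 1)) ⟨i - 1, by omega⟩ : BraidGroup n) :=
    dif_pos (⟨h1, by omega⟩ : 1 ≤ i ∧ i ≤ n - 1)
  have key : (⟨i + 1 - 1, by omega⟩ : Fin (n - 1)) = ⟨(i - 1) + 1, by omega⟩ := by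
    rw [Fin.mk.injEq]; omega
  have e2 : σ n (i + 1) =
      (PresentedGroup.of (rels := braidRels (n - 1)) ⟨(i - 1) + 1, by omega⟩ : BraidGroup n) :=
    (dif_pos (⟨by omega, h2⟩ : 1 ≤ i + 1 ∧ i + 1 ≤ n - 1)).trans (congrArg PresentedGroup.of key)
  rw [e1, e2]
  have hmem : (FreeGroup.of (⟨i - 1, by omega⟩ : Fin (n-1)) * .of ⟨(i-1) + 1, by omega⟩ *
      .of ⟨i - 1, by omega⟩ *
      (.of ⟨(i-1) + 1, by omega⟩ * .of ⟨i - 1, by omega⟩ * .of ⟨(i-1)+1, by omega⟩)⁻¹)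
      ∈ braidRels (n - 1) :=
    Or.inr ⟨⟨i - 1, by omega⟩, by show i - 1 + 1 < n - 1; omega, rfl⟩
  have h := mk_rel_eq_one hmem
  rw [map_mul, map_inv, mul_inv_eq_one, map_mul, map_mul, map_mul, map_mul] at h
  exact h

/-- The canonical homomorphism `ι : B_{n-1} → B_n` determined by `σ_i ↦ σ_i`. -/
def ι (n : ℕ) : BraidGroup (n - 1) →* BraidGroup n :=
  PresentedGroup.toGroup (f := fun i : Fin (n - 1 - 1) => σ n (i.val + 1))
    (by
      rintro r (⟨i, j, hij, rfl⟩ | ⟨i, hij, rfl⟩) <;>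
        simp only [map_mul, map_inv, FreeGroup.lift_apply_of] <;> rw [mul_inv_eq_one]
      · exact σ_comm (by omega) (by omega) (by have := j.isLt; omega)
      · exact σ_braid (by omega) (by have := i.isLt; omega))

theorem _root_.SemiconjBy.list_prod_map {α M : Type*} [Monoid M] {x : M} {f g : α → M}
    {l : List α} (h : ∀ i ∈ l, SemiconjBy x (f i) (g i)) :
    SemiconjBy x (l.map f).prod (l.map g).prod := by
  induction l with
  | nil => exact SemiconjBy.one_right x
  | cons i l ih =>
    simp only [List.map_cons, List.prod_cons]
    exact (h i List.mem_cons_self).mul_right (ih fun j hj => h j (List.mem_cons_of_mem i hj))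

theorem _root_.Subgroup.normal_closure_of_conj_mem {G : Type*} [Group G] {X s : Set G}
    (hX : Subgroup.closure X = ⊤) (h₁ : ∀ x ∈ X, ∀ a ∈ s, x * a * x⁻¹ ∈ Subgroup.closure s)
    (h₂ : ∀ x ∈ X, ∀ a ∈ s, x⁻¹ * a * x ∈ Subgroup.closure s) : (Subgroup.closure s).Normal := by
  rw [← Subgroup.normalizer_eq_top_iff, eq_top_iff, ← hX, Subgroup.closure_le]
  intro x hx
  rw [SetLike.mem_coe, Subgroup.mem_normalizer_iff_map_conj_eq, MonoidHom.map_closure]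
  apply le_antisymm <;> rw [Subgroup.closure_le]
  · rintro _ ⟨a, ha, rfl⟩
    exact h₁ x hx a ha
  · intro a ha
    rw [← MonoidHom.map_closure]
    exact ⟨x⁻¹ * a * x, h₂ x hx a ha, by simp [mul_assoc]⟩

theorem _root_.Equiv.Perm.viaEmbedding_swap {α β : Type*} [DecidableEq α] [DecidableEq β]
    (e : α ↪ β) (a b : α) : (Equiv.swap a b).viaEmbedding e = Equiv.swap (e a) (e b) := by
  ext x
  by_cases hx : x ∈ Set.range e
  · obtain ⟨y, rfl⟩ := hx
    rw [Equiv.Perm.viaEmbedding_apply, Equiv.swap_apply_def, Equiv.swap_apply_def]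
    simp only [e.injective.eq_iff]
    split_ifs <;> rfl
  · rw [Equiv.Perm.viaEmbedding_apply_of_notMem _ _ _ hx,
      Equiv.swap_apply_of_ne_of_ne (fun h => hx ⟨a, h.symm⟩) (fun h => hx ⟨b, h.symm⟩)]

lemma swap_succ_apply_mem_Icc {n j k : ℕ} (hj : 1 ≤ j) (hjn : j ≤ n - 1) (hk : k ∈ Set.Icc 1 n) :
    Equiv.swap j (j + 1) k ∈ Set.Icc 1 n := by
  rw [Equiv.swap_apply_def]
  split_ifs <;> simp only [Set.mem_Icc] at hk ⊢ <;> omega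

section Words

variable {n : ℕ}

lemma σ_eq_one {i : ℕ} (h : ¬(1 ≤ i ∧ i ≤ n - 1)) : σ n i = 1 := dif_neg h

lemma σ_commute {i j : ℕ} (h : i + 2 ≤ j ∨ j + 2 ≤ i) : Commute (σ n i) (σ n j) := by
  by_cases hi : 1 ≤ i ∧ i ≤ n - 1
  · by_cases hj : 1 ≤ j ∧ j ≤ n - 1
    · rcases h with h | h
      · exact σ_comm hi.1 h hj.2
      · exact (σ_comm hj.1 h hi.2).symm
    · rw [σ_eq_one hj]; exact Commute.one_right _
  · rw [σ_eq_one hi]; exact Commute.one_left _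

lemma down_eq_one {a b : ℕ} (h : a < b) : down n a b = 1 := by
  rw [down, show a + 1 - b = 0 by omega]; rfl

lemma up_self (a : ℕ) : up n a a = σ n a := by
  simp [up]

lemma down_self (a : ℕ) : down n a a = σ n a := by
  simp [down]

lemma up_append {a m b : ℕ} (h₁ : a ≤ m + 1) (h₂ : m ≤ b) :
    up n a b = up n a m * up n (m + 1) b := by
  have h := List.range'_append_1 (s := a) (m := m + 1 - a) (n := b - m)
  rw [show a + (m + 1 - a) = m + 1 by omega, show m + 1 - a + (b - m) = b + 1 - a by omega] at h
  rw [up, up, up, ← List.prod_append, ← List.map_append, show b + 1 - (m + 1) = b - m by omega, h]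

lemma down_append {a m b : ℕ} (h₁ : b ≤ m + 1) (h₂ : m ≤ a) :
    down n a b = down n a (m + 1) * down n m b := by
  have h := List.range'_append_1 (s := b) (m := m + 1 - b) (n := a - m)
  rw [show b + (m + 1 - b) = m + 1 by omega, show m + 1 - b + (a - m) = a + 1 - b by omega] at h
  rw [down, down, down, ← List.prod_append, ← List.map_append, ← List.reverse_append,
    show a + 1 - (m + 1) = a - m by omega, h]

lemma up_succ_right {a b : ℕ} (h : a ≤ b + 1) : up n a (b + 1) = up n a b * σ n (b + 1) := by
  rw [up_append (m := b) h (by omega), up_self]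

lemma up_eq_σ_mul {a b : ℕ} (h : a ≤ b) : up n a b = σ n a * up n (a + 1) b := by
  rw [up_append (m := a) (by omega) h, up_self]

lemma down_eq_mul_σ {a b : ℕ} (h : b ≤ a) : down n a b = down n a (b + 1) * σ n b := by
  rw [down_append (m := b) (by omega) h, down_self]

lemma down_succ_left {a b : ℕ} (h : b ≤ a + 1) : down n (a + 1) b = σ n (a + 1) * down n a b := by
  rw [down_append (m := a) h (by omega), down_self]

lemma up_one_eq_mul_σ (hn : 2 ≤ n) : up n 1 (n - 1) = up n 1 (n - 2) * σ n (n - 1) := by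
  rw [← show n - 2 + 1 = n - 1 by omega, up_succ_right (by omega)]

lemma down_eq_σ_mul {k : ℕ} (hk : k ≤ n - 1) (hn : 2 ≤ n) :
    down n (n - 1) k = σ n (n - 1) * down n (n - 2) k := by
  rw [← show n - 2 + 1 = n - 1 by omega, down_succ_left (by omega)]

lemma commute_σ_up {j a b : ℕ} (h : j + 2 ≤ a ∨ b + 2 ≤ j) : Commute (σ n j) (up n a b) :=
  Commute.list_prod_right _ _ fun x hx => by
    obtain ⟨i, hi, rfl⟩ := List.mem_map.mp hx
    rw [List.mem_range'_1] at hi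
    exact σ_commute (by omega)

lemma commute_σ_down {j a b : ℕ} (h : j + 2 ≤ b ∨ a + 2 ≤ j) :
    Commute (σ n j) (down n a b) :=
  Commute.list_prod_right _ _ fun x hx => by
    obtain ⟨i, hi, rfl⟩ := List.mem_map.mp hx
    rw [List.mem_reverse, List.mem_range'_1] at hi
    exact σ_commute (by omega)

lemma commute_down_down {a b a' b' : ℕ} (h : a + 2 ≤ b' ∨ a' + 2 ≤ b) :
    Commute (down n a b) (down n a' b') :=
  Commute.list_prod_left _ _ fun x hx => by
    obtain ⟨i, hi, rfl⟩ := List.mem_map.mp hx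
    rw [List.mem_reverse, List.mem_range'_1] at hi
    exact commute_σ_down (by omega)

lemma semiconjBy_up_σ {a b j : ℕ} (ha : 1 ≤ a) (hj : a ≤ j) (hjb : j < b) (hb : b ≤ n - 1) :
    SemiconjBy (up n a b) (σ n j) (σ n (j + 1)) := by
  have e : up n a b = up n a (j - 1) * (σ n j * σ n (j + 1)) * up n (j + 2) b := by
    rw [up_append (m := j - 1) (by omega) (by omega), show j - 1 + 1 = j by omega,
      up_eq_σ_mul (a := j) (by omega), up_eq_σ_mul (a := j + 1) (by omega)]
    simp only [mul_assoc]
  have hM : SemiconjBy (σ n j * σ n (j + 1)) (σ n j) (σ n (j + 1)) := by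
    rw [SemiconjBy, σ_braid (by omega) (by omega), mul_assoc]
  have hL : Commute (up n a (j - 1)) (σ n (j + 1)) := (commute_σ_up (Or.inr (by omega))).symm
  have hR : Commute (up n (j + 2) b) (σ n j) := (commute_σ_up (Or.inl le_rfl)).symm
  rw [e]
  exact (SemiconjBy.mul_left hL hM).mul_left hR

lemma semiconjBy_down_σ {a b j : ℕ} (hb : 1 ≤ b) (hj : b ≤ j) (hja : j < a) (ha : a ≤ n - 1) :
    SemiconjBy (down n a b) (σ n (j + 1)) (σ n j) := by
  have e : down n a b = down n a (j + 2) * (σ n (j + 1) * σ n j) * down n (j - 1) b := by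
    rw [down_append (m := j - 1) (by omega) (by omega), show j - 1 + 1 = j by omega,
      down_eq_mul_σ (a := a) (b := j) (by omega), down_eq_mul_σ (a := a) (b := j + 1) (by omega)]
    simp only [mul_assoc]
  have hM : SemiconjBy (σ n (j + 1) * σ n j) (σ n (j + 1)) (σ n j) := by
    rw [SemiconjBy, ← σ_braid (by omega) (by omega), mul_assoc]
  have hL : Commute (down n a (j + 2)) (σ n j) := (commute_σ_down (Or.inl le_rfl)).symm
  have hR : Commute (down n (j - 1) b) (σ n (j + 1)) := (commute_σ_down (Or.inr (by omega))).symm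
  rw [e]
  exact (SemiconjBy.mul_left hL hM).mul_left hR

lemma semiconjBy_up_shift {x : BraidGroup n} {a b : ℕ}
    (h : ∀ i, a ≤ i → i ≤ b → SemiconjBy x (σ n i) (σ n (i + 1))) :
    SemiconjBy x (up n a b) (up n (a + 1) (b + 1)) := by
  rw [up, up, show b + 1 + 1 - (a + 1) = b + 1 - a by omega, List.range'_succ_left, List.map_map]
  exact SemiconjBy.list_prod_map fun i hi => by
    rw [List.mem_range'_1] at hi
    exact h i hi.1 (by omega)

lemma semiconjBy_down_shift {x : BraidGroup n} {a b : ℕ}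
    (h : ∀ i, b ≤ i → i ≤ a → SemiconjBy x (σ n i) (σ n (i + 1))) :
    SemiconjBy x (down n a b) (down n (a + 1) (b + 1)) := by
  rw [down, down, show a + 1 + 1 - (b + 1) = a + 1 - b by omega, List.range'_succ_left,
    ← List.map_reverse, List.map_map]
  exact SemiconjBy.list_prod_map fun i hi => by
    rw [List.mem_reverse, List.mem_range'_1] at hi
    exact h i hi.1 (by omega)

end Words

section Flips

variable {n : ℕ}

lemma down_mul_down_succ {a b : ℕ} (hb : 1 ≤ b) (ha : a + 1 ≤ n - 1) :
    down n (a + 1) b * down n (a + 1) (b + 1) = down n a b * down n (a + 1) b := by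
  have h := semiconjBy_down_shift (x := (down n (a + 1) b)⁻¹) (a := a) (b := b)
    fun i hi₁ hi₂ => (semiconjBy_down_σ hb hi₁ (by omega) ha).inv_symm_left
  exact SemiconjBy.inv_symm_left_iff.mp h

lemma semiconjBy_down_mul_down {a b : ℕ} (hb : 1 ≤ b) (hba : b ≤ a + 1) (ha : a + 1 ≤ n - 1) :
    SemiconjBy (down n a b * down n (a + 1) (b + 1)) (σ n b) (σ n (a + 1)) := by
  rw [SemiconjBy, mul_assoc, ← down_eq_mul_σ hba, ← mul_assoc, ← down_succ_left hba,
    down_mul_down_succ hb ha]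

lemma semiconjBy_up_mul_up (hn : 2 ≤ n) :
    SemiconjBy (up n 1 (n - 1) * up n 1 (n - 1)) (σ n (n - 1)) (σ n 1) := by
  have hU₁ := up_one_eq_mul_σ hn
  have hU₂ : up n 1 (n - 1) = σ n 1 * up n 2 (n - 1) := up_eq_σ_mul (by omega)
  set U := up n 1 (n - 1)
  have hshift : U * up n 1 (n - 2) = up n 2 (n - 1) * U := by
    have h := semiconjBy_up_shift (x := U) (a := 1) (b := n - 2)
      fun i hi₁ hi₂ => semiconjBy_up_σ le_rfl hi₁ (by omega) le_rfl
    rwa [show n - 2 + 1 = n - 1 by omega] at h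
  calc U * U * σ n (n - 1) = σ n 1 * up n 2 (n - 1) * U * σ n (n - 1) := by rw [← hU₂]
    _ = σ n 1 * (U * up n 1 (n - 2)) * σ n (n - 1) := by rw [hshift, mul_assoc (σ n 1)]
    _ = σ n 1 * (U * U) := by rw [mul_assoc, mul_assoc, ← hU₁]

def flipCore (n j : ℕ) : BraidGroup n :=
  down n (j - 1) 1 * up n 1 (n - 1) * down n (n - 1) (j + 1)

lemma flip_eq_flipCore_mul {j : ℕ} (hj : j ≤ n - 1) : flip n j = flipCore n j * σ n j := by
  rw [flip, flipCore, down_eq_mul_σ hj, mul_assoc _ (down n (n - 1) (j + 1))]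

lemma flip_succ_eq_σ_mul_flipCore (j : ℕ) : flip n (j + 1) = σ n j * flipCore n j := by
  rcases j with _ | j
  · rw [flip, flipCore, σ_eq_one (by omega), one_mul]
  · rw [flip, flipCore, Nat.add_sub_cancel, Nat.add_sub_cancel, down_succ_left (by omega)]
    simp only [mul_assoc]

lemma flipCore_mul_flipCore {j : ℕ} (hj₁ : 1 ≤ j) (hj : j ≤ n - 1) :
    flipCore n j * flipCore n j = (down n (j - 1) 1 * down n j 2) *
      (up n 1 (n - 1) * up n 1 (n - 1)) * (down n (n - 2) j * down n (n - 1) (j + 1)) := by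
  have hcomm : Commute (down n (n - 1) (j + 1)) (down n (j - 1) 1) :=
    commute_down_down (Or.inr (by omega))
  have hleft : up n 1 (n - 1) * down n (j - 1) 1 = down n j 2 * up n 1 (n - 1) := by
    have h := semiconjBy_down_shift (x := up n 1 (n - 1)) (a := j - 1) (b := 1)
      fun i hi₁ hi₂ => semiconjBy_up_σ le_rfl hi₁ (by omega) le_rfl
    rwa [show j - 1 + 1 = j by omega] at h
  have hright : up n 1 (n - 1) * down n (n - 2) j = down n (n - 1) (j + 1) * up n 1 (n - 1) := by
    have h := semiconjBy_down_shift (x := up n 1 (n - 1)) (a := n - 2) (b := j)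
      fun i hi₁ hi₂ => semiconjBy_up_σ le_rfl (by omega) (by omega) le_rfl
    rwa [show n - 2 + 1 = n - 1 by omega] at h
  calc flipCore n j * flipCore n j
      = down n (j - 1) 1 * up n 1 (n - 1) * (down n (n - 1) (j + 1) * down n (j - 1) 1) *
          up n 1 (n - 1) * down n (n - 1) (j + 1) := by simp only [flipCore, mul_assoc]
    _ = down n (j - 1) 1 * (up n 1 (n - 1) * down n (j - 1) 1) *
          (down n (n - 1) (j + 1) * up n 1 (n - 1)) * down n (n - 1) (j + 1) := by
        rw [hcomm.eq]; simp only [mul_assoc]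
    _ = _ := by rw [hleft, ← hright]; simp only [mul_assoc]

lemma commute_flipCore_mul_flipCore {j : ℕ} (hj₁ : 1 ≤ j) (hj : j ≤ n - 1) :
    Commute (flipCore n j * flipCore n j) (σ n j) := by
  have hX := semiconjBy_down_mul_down (n := n) (a := j - 1) (b := 1) le_rfl (by omega) (by omega)
  have hY := semiconjBy_down_mul_down (n := n) (a := n - 2) (b := j) hj₁ (by omega) (by omega)
  rw [show j - 1 + 1 = j by omega] at hX
  rw [show n - 2 + 1 = n - 1 by omega] at hY
  rw [flipCore_mul_flipCore hj₁ hj]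
  exact (hX.mul_left (semiconjBy_up_mul_up (by omega))).mul_left hY

lemma commute_flip_σ {m j : ℕ} (hj : 1 ≤ j) (hjn : j ≤ n - 1) (hm : 1 ≤ m) (hmn : m ≤ n)
    (h₁ : m ≠ j) (h₂ : m ≠ j + 1) : Commute (flip n m) (σ n j) := by
  rcases lt_or_gt_of_ne h₁ with hmj | hjm
  · obtain ⟨i, rfl⟩ : ∃ i, j = i + 1 := ⟨j - 1, by omega⟩
    have hD : Commute (down n (m - 1) 1) (σ n (i + 1)) :=
      (commute_σ_down (Or.inr (by omega))).symm
    exact (SemiconjBy.mul_left hD (semiconjBy_up_σ le_rfl (by omega) (by omega) le_rfl)).mul_left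
      (semiconjBy_down_σ hm (by omega) (by omega) le_rfl)
  · have hτ : Commute (down n (n - 1) m) (σ n j) := (commute_σ_down (Or.inl (by omega))).symm
    exact ((semiconjBy_down_σ le_rfl hj (by omega) (by omega)).mul_left
      (semiconjBy_up_σ le_rfl hj (by omega) le_rfl)).mul_left hτ

lemma flip_mem_R' {m : ℕ} (hm : 1 ≤ m) (hmn : m ≤ n) : flip n m ∈ R' n :=
  Subgroup.subset_closure ⟨m, ⟨hm, hmn⟩, rfl⟩

lemma σ_mul_flip_mul_inv_mem {m j : ℕ} (hj : 1 ≤ j) (hjn : j ≤ n - 1) (hm : 1 ≤ m)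
    (hmn : m ≤ n) : σ n j * flip n m * (σ n j)⁻¹ ∈ R' n := by
  rcases eq_or_ne m j with rfl | h₁
  · rw [flip_eq_flipCore_mul hjn, ← mul_assoc, mul_inv_cancel_right,
      ← flip_succ_eq_σ_mul_flipCore]
    exact flip_mem_R' (by omega) (by omega)
  rcases eq_or_ne m (j + 1) with rfl | h₂
  · have hQ := (commute_flipCore_mul_flipCore hj hjn).eq
    have key : σ n j * flip n (j + 1) * (σ n j)⁻¹ =
        flip n (j + 1) * flip n j * (flip n (j + 1))⁻¹ := by
      rw [flip_succ_eq_σ_mul_flipCore, flip_eq_flipCore_mul hjn]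
      calc σ n j * (σ n j * flipCore n j) * (σ n j)⁻¹
          = σ n j * (σ n j * (flipCore n j * flipCore n j)) * (flipCore n j)⁻¹ * (σ n j)⁻¹ := by
            group
        _ = _ := by rw [← hQ]; group
    rw [key]
    exact mul_mem (mul_mem (flip_mem_R' hm hmn) (flip_mem_R' hj (by omega)))
      (inv_mem (flip_mem_R' hm hmn))
  · rw [← (commute_flip_σ hj hjn hm hmn h₁ h₂).eq, mul_inv_cancel_right]
    exact flip_mem_R' hm hmn

lemma inv_σ_mul_flip_mul_mem {m j : ℕ} (hj : 1 ≤ j) (hjn : j ≤ n - 1) (hm : 1 ≤ m)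
    (hmn : m ≤ n) : (σ n j)⁻¹ * flip n m * σ n j ∈ R' n := by
  rcases eq_or_ne m j with rfl | h₁
  · have hQ := (commute_flipCore_mul_flipCore hm hjn).eq
    have key : (σ n m)⁻¹ * flip n m * σ n m = (flip n m)⁻¹ * flip n (m + 1) * flip n m := by
      rw [flip_succ_eq_σ_mul_flipCore, flip_eq_flipCore_mul hjn]
      calc (σ n m)⁻¹ * (flipCore n m * σ n m) * σ n m
          = (σ n m)⁻¹ * (flipCore n m)⁻¹ * (flipCore n m * flipCore n m * σ n m) * σ n m := by
            group
        _ = _ := by rw [hQ]; group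
    rw [key]
    exact mul_mem (mul_mem (inv_mem (flip_mem_R' hm hmn)) (flip_mem_R' (by omega) (by omega)))
      (flip_mem_R' hm hmn)
  rcases eq_or_ne m (j + 1) with rfl | h₂
  · rw [flip_succ_eq_σ_mul_flipCore, inv_mul_cancel_left, ← flip_eq_flipCore_mul hjn]
    exact flip_mem_R' hj (by omega)
  · rw [mul_assoc, (commute_flip_σ hj hjn hm hmn h₁ h₂).eq, inv_mul_cancel_left]
    exact flip_mem_R' hm hmn

lemma closure_σ_eq_top : Subgroup.closure (σ n '' Set.Icc 1 (n - 1)) = ⊤ := by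
  refine eq_top_iff.mpr ((PresentedGroup.closure_range_of (braidRels (n - 1))).symm.le.trans
    (Subgroup.closure_mono ?_))
  rintro _ ⟨i, rfl⟩
  exact ⟨i + 1, ⟨by omega, by omega⟩, dif_pos ⟨by omega, by omega⟩⟩

instance R'_normal : (R' n).Normal := by
  refine Subgroup.normal_closure_of_conj_mem closure_σ_eq_top ?_ ?_ <;>
    rintro _ ⟨j, ⟨hj, hjn⟩, rfl⟩ _ ⟨m, ⟨hm, hmn⟩, rfl⟩
  · exact σ_mul_flip_mul_inv_mem hj hjn hm hmn
  · exact inv_σ_mul_flip_mul_mem hj hjn hm hmn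

end Flips

section Inclusion

variable {n : ℕ}

lemma ι_of (x : Fin (n - 1 - 1)) : ι n (PresentedGroup.of x) = σ n (x.val + 1) :=
  PresentedGroup.toGroup.of _

lemma ι_σ {i : ℕ} (h : i ≤ n - 2) : ι n (σ (n - 1) i) = σ n i := by
  rcases i with _ | i
  · rw [σ_eq_one (by omega), σ_eq_one (by omega), map_one]
  · exact (congrArg (ι n) (dif_pos ⟨by omega, by omega⟩)).trans (ι_of ⟨i, by omega⟩)

lemma ι_up {a b : ℕ} (h : b ≤ n - 2) : ι n (up (n - 1) a b) = up n a b := by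
  rw [up, up, map_list_prod, List.map_map]
  refine congrArg List.prod (List.map_congr_left fun i hi => ι_σ ?_)
  rw [List.mem_range'_1] at hi
  omega

lemma ι_down {a b : ℕ} (h : a ≤ n - 2) : ι n (down (n - 1) a b) = down n a b := by
  rw [down, down, map_list_prod, List.map_map]
  refine congrArg List.prod (List.map_congr_left fun i hi => ι_σ ?_)
  rw [List.mem_reverse, List.mem_range'_1] at hi
  omega

lemma ι_flip {k : ℕ} (hk : k ≤ n - 1) :
    ι n (flip (n - 1) k) = down n (k - 1) 1 * up n 1 (n - 2) * down n (n - 2) k := by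
  rw [flip, map_mul, map_mul, ι_down (by omega), ι_up (by omega), ι_down (by omega)]
  rfl

lemma down_mul_σ_mul_inv_eq {k : ℕ} (hk : 1 ≤ k) (hkn : k ≤ n - 1) :
    down n (n - 1) k * σ n k * (down n (n - 1) (k + 1))⁻¹ =
      (ι n (flip (n - 1) k))⁻¹ * flip n k := by
  have hband := down_mul_down_succ (n := n) (a := n - 2) hk (by omega)
  rw [show n - 2 + 1 = n - 1 by omega] at hband
  have hkey : down n (n - 2) k * (down n (n - 1) k * σ n k) =
      σ n (n - 1) * down n (n - 1) k * down n (n - 1) (k + 1) := by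
    rw [← mul_assoc, ← hband, mul_assoc, ← down_eq_mul_σ hkn, mul_assoc, hband, ← mul_assoc,
      ← down_eq_σ_mul hkn (by omega)]
  rw [eq_inv_mul_iff_mul_eq, ι_flip hkn, flip, up_one_eq_mul_σ (by omega)]
  calc down n (k - 1) 1 * up n 1 (n - 2) * down n (n - 2) k *
        (down n (n - 1) k * σ n k * (down n (n - 1) (k + 1))⁻¹)
      = down n (k - 1) 1 * up n 1 (n - 2) * (down n (n - 2) k * (down n (n - 1) k * σ n k)) *
          (down n (n - 1) (k + 1))⁻¹ := by group
    _ = _ := by rw [hkey]; group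

end Inclusion

section Permutations

variable {n : ℕ}

lemma toPerm_σ {i : ℕ} (h₁ : 1 ≤ i) (h₂ : i ≤ n - 1) :
    toPerm n (σ n i) = Equiv.swap ⟨i - 1, by omega⟩ ⟨i, by omega⟩ := by
  refine ((congrArg (toPerm n) (dif_pos ⟨h₁, h₂⟩)).trans (PresentedGroup.toGroup.of _)).trans ?_
  simp only [permGen, Nat.sub_add_cancel h₁]

lemma toPerm_σ_inv (i : ℕ) : (toPerm n (σ n i))⁻¹ = toPerm n (σ n i) := by
  by_cases h : 1 ≤ i ∧ i ≤ n - 1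
  · rw [toPerm_σ h.1 h.2, Equiv.swap_inv]
  · rw [σ_eq_one h, map_one, inv_one]

lemma toPerm_down (a b : ℕ) : toPerm n (down n a b) = (toPerm n (up n b a))⁻¹ := by
  rw [down, up, map_list_prod, map_list_prod, List.prod_inv_reverse, List.map_map,
    List.map_map, List.map_reverse, List.map_map]
  simp only [Function.comp_def, toPerm_σ_inv]

lemma toPerm_flip {m : ℕ} (hm : 1 ≤ m) (hmn : m ≤ n) : toPerm n (flip n m) = 1 := by
  rw [flip, map_mul, map_mul, toPerm_down, toPerm_down,
    up_append (a := 1) (m := m - 1) (b := n - 1) (by omega) (by omega),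
    Nat.sub_add_cancel hm, map_mul]
  group

lemma R'_le_P : R' n ≤ P n :=
  (Subgroup.closure_le _).mpr fun _ ⟨_, ⟨hm, hmn⟩, hr⟩ => hr ▸ toPerm_flip hm hmn

lemma toPerm_comp_ι :
    (toPerm n).comp (ι n) =
      (Equiv.Perm.viaEmbeddingHom (Fin.castLEEmb (Nat.sub_le n 1))).comp (toPerm (n - 1)) := by
  refine PresentedGroup.ext fun x => ?_
  have hx := x.isLt
  change toPerm n (ι n (PresentedGroup.of x)) =
    Equiv.Perm.viaEmbeddingHom _ (toPerm (n - 1) (PresentedGroup.of x))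
  rw [ι_of, toPerm_σ (by omega) (by omega)]
  refine Eq.trans ?_ (congrArg _ (PresentedGroup.toGroup.of _).symm)
  rw [Equiv.Perm.viaEmbeddingHom_apply, permGen, Equiv.Perm.viaEmbedding_swap]
  rfl

lemma toPerm_ι_apply_last (hn : 1 ≤ n) (c : BraidGroup (n - 1)) :
    toPerm n (ι n c) ⟨n - 1, by omega⟩ = ⟨n - 1, by omega⟩ := by
  rw [← MonoidHom.comp_apply, toPerm_comp_ι, MonoidHom.comp_apply,
    Equiv.Perm.viaEmbeddingHom_apply, Equiv.Perm.viaEmbedding_apply_of_notMem]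
  rintro ⟨y, hy⟩
  have h := congrArg Fin.val hy
  simp only [Fin.coe_castLEEmb, Fin.val_castLE] at h
  omega

lemma mem_P_of_ι_mem_P {c : BraidGroup (n - 1)} (h : ι n c ∈ P n) : c ∈ P (n - 1) := by
  have h' : ((toPerm n).comp (ι n)) c = 1 := h
  rw [toPerm_comp_ι, MonoidHom.comp_apply] at h'
  exact Equiv.Perm.viaEmbeddingHom_injective _ (h'.trans (map_one _).symm)

lemma toPerm_down_apply_last {k : ℕ} (hk : 1 ≤ k) (hkn : k ≤ n - 1) :
    toPerm n (down n (n - 1) k) ⟨n - 1, by omega⟩ = ⟨n - 2, by omega⟩ := by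
  rw [down_eq_σ_mul hkn (by omega), ← ι_down le_rfl, map_mul, Equiv.Perm.mul_apply,
    toPerm_ι_apply_last (by omega), toPerm_σ (by omega) le_rfl, Equiv.swap_apply_right]
  exact Fin.ext (by simp only; omega)

end Permutations

section Cosets

variable {n : ℕ}

lemma σ_mem_sup {j : ℕ} (hj : j ≤ n - 2) : σ n j ∈ (ι n).range ⊔ R' n :=
  Subgroup.mem_sup_left ⟨σ (n - 1) j, ι_σ hj⟩

lemma down_mul_σ_mul_inv_mem {j k : ℕ} (hj : 1 ≤ j) (hjn : j ≤ n - 1) (hk : k ∈ Set.Icc 1 n) :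
    down n (n - 1) k * σ n j * (down n (n - 1) (Equiv.swap j (j + 1) k))⁻¹ ∈
      (ι n).range ⊔ R' n := by
  obtain ⟨hk, hkn⟩ := hk
  rw [Equiv.swap_apply_def]
  split_ifs with h₁ h₂
  · subst h₁
    rw [down_mul_σ_mul_inv_eq hk hjn]
    exact mul_mem (inv_mem (Subgroup.mem_sup_left ⟨_, rfl⟩))
      (Subgroup.mem_sup_right (flip_mem_R' hk hkn))
  · subst h₂
    rw [← down_eq_mul_σ hjn, mul_inv_cancel]
    exact one_mem _
  · rcases lt_or_gt_of_ne h₁ with hkj | hjk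
    · obtain ⟨i, rfl⟩ : ∃ i, j = i + 1 := ⟨j - 1, by omega⟩
      rw [(semiconjBy_down_σ hk (by omega) (by omega) le_rfl).eq, mul_inv_cancel_right]
      exact σ_mem_sup (by omega)
    · rw [← (commute_σ_down (Or.inl (by omega))).eq, mul_inv_cancel_right]
      exact σ_mem_sup (by omega)

lemma exists_mul_inv_down_mem (hn : 1 ≤ n) (x : BraidGroup n) :
    ∃ k ∈ Set.Icc 1 n, x * (down n (n - 1) k)⁻¹ ∈ (ι n).range ⊔ R' n := by
  have hx : x ∈ Subgroup.closure (σ n '' Set.Icc 1 (n - 1)) := closure_σ_eq_top ▸ Subgroup.mem_top x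
  induction hx using Subgroup.closure_induction_right with
  | one =>
    refine ⟨n, ⟨hn, le_rfl⟩, ?_⟩
    rw [down_eq_one (by omega), inv_one, one_mul]
    exact one_mem _
  | mul_right x _ _ hσ ih =>
    obtain ⟨j, ⟨hj, hjn⟩, rfl⟩ := hσ
    obtain ⟨k, hk, hmem⟩ := ih
    refine ⟨_, swap_succ_apply_mem_Icc hj hjn hk, ?_⟩
    convert mul_mem hmem (down_mul_σ_mul_inv_mem hj hjn hk) using 1
    group
  | mul_inv_cancel x _ _ hσ ih =>
    obtain ⟨j, ⟨hj, hjn⟩, rfl⟩ := hσ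
    obtain ⟨k, hk, hmem⟩ := ih
    have hk' := swap_succ_apply_mem_Icc hj hjn hk
    refine ⟨_, hk', ?_⟩
    have h := inv_mem (down_mul_σ_mul_inv_mem hj hjn hk')
    rw [Equiv.swap_apply_self] at h
    convert mul_mem hmem h using 1
    group

lemma exists_ι_mul_of_mem_sup {g : BraidGroup n} (hg : g ∈ (ι n).range ⊔ R' n) :
    ∃ c, ∃ r ∈ R' n, g = ι n c * r := by
  rw [← SetLike.mem_coe, Subgroup.mul_normal] at hg
  obtain ⟨_, ⟨c, rfl⟩, r, hr, rfl⟩ := hg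
  exact ⟨c, r, hr, rfl⟩

lemma eq_of_ι_mul_mul_down_mem_P {c : BraidGroup (n - 1)} {r : BraidGroup n} {k : ℕ}
    (hr : r ∈ P n) (hk : k ∈ Set.Icc 1 n) (h : ι n c * r * down n (n - 1) k ∈ P n) : k = n := by
  obtain ⟨hk, hkn⟩ := hk
  by_contra hne
  have hr' : toPerm n r = 1 := hr
  have h' := congrArg (· ⟨n - 1, by omega⟩) (h : toPerm n (ι n c * r * down n (n - 1) k) = 1)
  simp only [map_mul, hr', mul_one, Equiv.Perm.mul_apply, Equiv.Perm.one_apply,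
    toPerm_down_apply_last hk (by omega : k ≤ n - 1)] at h'
  have := (toPerm n (ι n c)).injective (h'.trans (toPerm_ι_apply_last (by omega) c).symm)
  simp only [Fin.mk.injEq] at this
  omega

end Cosets

/-- Proposition 1 (existence): every coset of `R_n'` in `P_n` contains a representative in
which the `n`-th strand runs straight: for every `b ∈ P_n` there are `c ∈ P_{n-1}` and
`r ∈ R_n'` with `b = ι(c) · r`. -/
theorem exists_straight_representative (n : ℕ) (hn : 3 ≤ n) :
    ∀ b ∈ P n, ∃ c ∈ P (n - 1), ∃ r ∈ R' n, b = ι n c * r := by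
  intro b hb
  obtain ⟨k, hk, hmem⟩ := exists_mul_inv_down_mem (by omega) b
  obtain ⟨c, r, hr, hcr⟩ := exists_ι_mul_of_mem_sup hmem
  have hb' : b = ι n c * r * down n (n - 1) k := by rw [← hcr, inv_mul_cancel_right]
  have hkn : k = n := eq_of_ι_mul_mul_down_mem_P (R'_le_P hr) hk (hb' ▸ hb)
  rw [hkn, down_eq_one (by omega), mul_one] at hb'
  have hι : ι n c ∈ P n := by
    rw [← mul_inv_cancel_right (ι n c) r, ← hb']
    exact mul_mem hb (inv_mem (R'_le_P hr))
  exact ⟨c, mem_P_of_ι_mem_P hι, r, hr, hb'⟩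

end Braid
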